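/- The adapter encoding after attention agrees with the augmented adapter encoding on the first N1 rows: if U' = σ(M V W_v W_o W_down) W_up + M V W_v W_o and Ũ' = σ(M̃ V̂ W_down) W_up + M̃ V̂ with V̂ = Ṽ W_o, then U' = Ũ'_{1:N1,:}, provided σ acts entrywise. -/

import Mathlib

/-! Multiplying by the off-diagonal block matrix `M̃` sends the stacked values `[Q W_q; V W_v] W_o`
to a matrix whose top block is `M V W_v W_o`, since the top block row of `M̃` is `[0, M]`. The adapter
`X ↦ σ(X W_down) W_up + X` acts on each row of `X` separately (`σ` is entrywise), so it commutes with
taking the top block of rows. -/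

open Matrix

namespace Matrix

variable {m m' n k R : Type*} [Fintype n] [Fintype k] [NonUnitalNonAssocSemiring R]

def adapter (σ : R → R) (Wdown : Matrix n k R) (Wup : Matrix k n R) (X : Matrix m n R) :
    Matrix m n R :=
  (X * Wdown).map σ * Wup + X

theorem submatrix_id_mul {p : Type*} (A : Matrix m n R) (B : Matrix n p R) (e : m' → m) :
    (A * B).submatrix e id = A.submatrix e id * B := by
  rw [submatrix_mul A B e id id Function.bijective_id, submatrix_id_id]

theorem adapter_submatrix_id (σ : R → R) (Wdown : Matrix n k R) (Wup : Matrix k n R)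
    (X : Matrix m n R) (e : m' → m) :
    (adapter σ Wdown Wup X).submatrix e id = adapter σ Wdown Wup (X.submatrix e id) := by
  rw [adapter, adapter, ← submatrix_id_mul, ← submatrix_map, ← submatrix_id_mul]
  rfl

theorem fromBlocks_zero_mul_fromRows_submatrix_inl {m₁ m₂ p : Type*} [Fintype m₁] [Fintype m₂]
    (A : Matrix m₁ m₂ R) (B : Matrix m₂ m₁ R) (X : Matrix m₁ p R) (Y : Matrix m₂ p R) :
    (fromBlocks 0 A B 0 * fromRows X Y).submatrix Sum.inl id = A * Y := by
  ext i j
  simp [mul_apply]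

end Matrix

theorem adapter_equals_augmented_adapter (N1 N2 dk dv d l : ℕ)
    (M : Matrix (Fin N1) (Fin N2) ℝ)
    (Q : Matrix (Fin N1) (Fin dk) ℝ) (Wq : Matrix (Fin dk) (Fin d) ℝ)
    (V : Matrix (Fin N2) (Fin dv) ℝ) (Wv : Matrix (Fin dv) (Fin d) ℝ)
    (Wo : Matrix (Fin d) (Fin d) ℝ)
    (Wdown : Matrix (Fin d) (Fin l) ℝ) (Wup : Matrix (Fin l) (Fin d) ℝ)
    (σ : ℝ → ℝ)
    (Mtil : Matrix (Fin N1 ⊕ Fin N2) (Fin N1 ⊕ Fin N2) ℝ)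
    (hM : Mtil = Matrix.fromBlocks 0 M Mᵀ 0)
    (Vhat : Matrix (Fin N1 ⊕ Fin N2) (Fin d) ℝ)
    (hV : Vhat = Matrix.fromRows (Q * Wq) (V * Wv) * Wo)
    (U' : Matrix (Fin N1) (Fin d) ℝ)
    (hU : U' = (M * V * Wv * Wo * Wdown).map σ * Wup + M * V * Wv * Wo)
    (Util' : Matrix (Fin N1 ⊕ Fin N2) (Fin d) ℝ)
    (hUtil : Util' = (Mtil * Vhat * Wdown).map σ * Wup + Mtil * Vhat) :
    ∀ (i : Fin N1) (j : Fin d), U' i j = Util' (Sum.inl i) j := by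
  have top_rows : (Mtil * Vhat).submatrix Sum.inl id = M * V * Wv * Wo := by
    rw [hM, hV, ← Matrix.mul_assoc, submatrix_id_mul, fromBlocks_zero_mul_fromRows_submatrix_inl,
      Matrix.mul_assoc M V Wv]
  have hU' : U' = (adapter σ Wdown Wup (Mtil * Vhat)).submatrix Sum.inl id := by
    rw [adapter_submatrix_id, top_rows, hU, adapter]
  intro i j
  rw [hU', hUtil]
  rfl
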